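/- Let A be a uniform algebra on a compact metric space X generated by a sequence of functions f_1, f_2, ..., and suppose there is a positive integer N such that for each n > N, the function f_n either is the inverse of an element of the closed subalgebra generated by f_1, ..., f_{n−1}, or satisfies exp(f_n) ∈ [f_1, ..., f_{n−1}] (is a logarithm of an element of that subalgebra). Then A is generated as a uniform algebra by N + 1 functions. -/

import Mathlib

/-- The closed subalgebra of `C(X, ℂ)` generated by a set of functions. -/
noncomputable def genUA {X : Type*} [TopologicalSpace X] [CompactSpace X]
    (S : Set C(X, ℂ)) : Subalgebra ℂ C(X, ℂ) :=
  (Algebra.adjoin ℂ S).topologicalClosure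

section Aux

variable {X : Type*} [TopologicalSpace X] [CompactSpace X]

lemma subset_genUA (S : Set C(X, ℂ)) : S ⊆ (genUA S : Set C(X, ℂ)) :=
  fun _x hx => (Algebra.adjoin ℂ S).le_topologicalClosure (Algebra.subset_adjoin hx)

lemma isClosed_genUA (S : Set C(X, ℂ)) :
    IsClosed ((genUA S : Subalgebra ℂ C(X, ℂ)) : Set C(X, ℂ)) :=
  Subalgebra.isClosed_topologicalClosure _

lemma genUA_le {S : Set C(X, ℂ)} {B : Subalgebra ℂ C(X, ℂ)} (hS : S ⊆ (B : Set C(X, ℂ)))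
    (hB : IsClosed (B : Set C(X, ℂ))) : genUA S ≤ B :=
  Subalgebra.topologicalClosure_minimal (Algebra.adjoin_le hS) hB

lemma mem_of_hasSum {B : Subalgebra ℂ C(X, ℂ)} (hB : IsClosed (B : Set C(X, ℂ)))
    {u : ℕ → C(X, ℂ)} (hu : ∀ n, u n ∈ B) {s : C(X, ℂ)} (hs : HasSum u s) : s ∈ B := by
  refine hB.mem_of_tendsto hs.tendsto_sum_nat (Filter.Eventually.of_forall fun n => ?_)
  exact B.sum_mem (fun i _ => hu i)

lemma exp_mem {B : Subalgebra ℂ C(X, ℂ)} (hB : IsClosed (B : Set C(X, ℂ)))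
    {u : C(X, ℂ)} (hu : u ∈ B) : NormedSpace.exp u ∈ B := by
  rw [NormedSpace.exp_eq_tsum ℂ]
  exact mem_of_hasSum hB (fun k => B.smul_mem (pow_mem hu k) _)
    (NormedSpace.expSeries_summable' (𝕂 := ℂ) u).hasSum

lemma inv_mem_of_near_one {B : Subalgebra ℂ C(X, ℂ)} (hB : IsClosed (B : Set C(X, ℂ)))
    {u : C(X, ℂ)} (hu : u ∈ B) (h : ‖1 - u‖ < 1) : ∃ s ∈ B, u * s = 1 := by
  refine ⟨∑' n : ℕ, (1 - u) ^ n,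
    mem_of_hasSum hB (fun k => pow_mem (B.sub_mem (one_mem B) hu) k)
      (summable_geometric_of_norm_lt_one h).hasSum, ?_⟩
  have := mul_neg_geom_series (1 - u) h
  simpa using this

end Aux

set_option maxHeartbeats 1000000 in
/-- If a uniform algebra `A` on a compact metric space is generated by a sequence
`f 0, f 1, f 2, …` such that, beyond the first `N` functions, each `f n` is either the
inverse of an element of the closed subalgebra generated by its predecessors, or a
logarithm (i.e. `exp (f n)` lies in that subalgebra), then `A` is generated by `N + 1`
functions. -/
theorem stmt19 {X : Type*} [MetricSpace X] [CompactSpace X]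
    (A : Subalgebra ℂ C(X, ℂ)) (f : ℕ → C(X, ℂ)) (N : ℕ)
    (hgen : A = genUA (Set.range f))
    (hstep : ∀ n, N ≤ n →
      (∃ g ∈ genUA (f '' {k | k < n}), f n * g = 1) ∨
      (∃ g ∈ genUA (f '' {k | k < n}), ∀ x, g x = Complex.exp (f n x))) :
    ∃ G : Fin (N + 1) → C(X, ℂ), A = genUA (Set.range G) := by
  classical
  -- choose witnesses
  have hstep' : ∀ n : ℕ, ∃ g : C(X, ℂ), N ≤ n →
      g ∈ genUA (f '' {k | k < n}) ∧ (f n * g = 1 ∨ ∀ x, g x = Complex.exp (f n x)) := by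
    intro n
    by_cases hn : N ≤ n
    · rcases hstep n hn with ⟨g, hg, hg1⟩ | ⟨g, hg, hg2⟩
      · exact ⟨g, fun _ => ⟨hg, Or.inl hg1⟩⟩
      · exact ⟨g, fun _ => ⟨hg, Or.inr hg2⟩⟩
    · exact ⟨0, fun h => absurd h hn⟩
  choose g hgmem using hstep'
  -- the rapidly decreasing constants
  set den : ℕ → ℝ := fun k => (‖g k‖ + 1) * (‖f k‖ + 1) with hdendef
  have hden1 : ∀ k, 1 ≤ den k := by
    intro k
    have h1 : (0:ℝ) ≤ ‖g k‖ := norm_nonneg _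
    have h2 : (0:ℝ) ≤ ‖f k‖ := norm_nonneg _
    simp only [hdendef]
    nlinarith
  have hdenpos : ∀ k, 0 < den k := fun k => lt_of_lt_of_le one_pos (hden1 k)
  set Q : ℕ → ℝ := fun n => ∏ k ∈ Finset.range n, (den k)⁻¹ with hQdef
  have hQpos : ∀ n, 0 < Q n := fun n =>
    Finset.prod_pos (fun k _ => inv_pos.2 (hdenpos k))
  have hQsucc : ∀ n, Q (n + 1) = Q n * (den n)⁻¹ := by
    intro n; simp only [hQdef]; rw [Finset.prod_range_succ]
  have hQle1 : ∀ n, Q n ≤ 1 := by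
    intro n
    simp only [hQdef]
    refine Finset.prod_le_one (fun k _ => (inv_nonneg).2 (hdenpos k).le) (fun k _ => ?_)
    rw [inv_le_one_iff₀]
    right; exact hden1 k
  have hQanti : ∀ a b : ℕ, a ≤ b → Q b ≤ Q a := by
    intro a b hab
    induction b with
    | zero => simp_all
    | succ m IH =>
      rcases Nat.lt_or_ge a (m+1) with hlt | hge
      · have h1 : Q m ≤ Q a := IH (by omega)
        have h2 : Q (m+1) ≤ Q m := by
          rw [hQsucc m]
          have : (den m)⁻¹ ≤ 1 := by rw [inv_le_one_iff₀]; right; exact hden1 m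
          nlinarith [hQpos m]
        linarith
      · have : a = m + 1 := le_antisymm hab hge
        simp [this]
  set c : ℕ → ℝ := fun n => (1/4 : ℝ)^n * Q n * (‖f n‖ + 1)⁻¹ with hcdef
  have hcpos : ∀ n, 0 < c n := by
    intro n
    simp only [hcdef]
    have := hQpos n
    positivity
  -- the sequence to sum
  set u : ℕ → C(X, ℂ) := fun m => if N ≤ m then ((c m : ℝ) : ℂ) • f m else 0 with hudef
  have hnorm_u : ∀ m, ‖u m‖ ≤ (1/4 : ℝ)^m * Q m := by
    intro m
    simp only [hudef]
    by_cases hm : N ≤ m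
    · rw [if_pos hm, norm_smul, Complex.norm_real, Real.norm_eq_abs,
        abs_of_pos (hcpos m)]
      simp only [hcdef]
      have h1 : (‖f m‖ + 1)⁻¹ * ‖f m‖ ≤ 1 := by
        rw [inv_mul_le_iff₀ (by positivity)]
        linarith [norm_nonneg (f m)]
      have h2 : (0:ℝ) ≤ (1/4:ℝ)^m * Q m := by positivity
      calc (1/4 : ℝ)^m * Q m * (‖f m‖ + 1)⁻¹ * ‖f m‖
          = ((1/4 : ℝ)^m * Q m) * ((‖f m‖ + 1)⁻¹ * ‖f m‖) := by ring
        _ ≤ ((1/4 : ℝ)^m * Q m) * 1 := by nlinarith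
        _ = (1/4 : ℝ)^m * Q m := by ring
    · rw [if_neg hm, norm_zero]
      positivity
  have hub : ∀ m, ‖u m‖ ≤ (1/4 : ℝ)^m := by
    intro m
    refine le_trans (hnorm_u m) ?_
    have := hQle1 m
    nlinarith [pow_pos (by norm_num : (0:ℝ) < 1/4) m, hQpos m]
  have hgeo : Summable (fun m : ℕ => (1/4 : ℝ)^m) :=
    summable_geometric_of_lt_one (by norm_num) (by norm_num)
  have husum : Summable u := Summable.of_norm_bounded hgeo hub
  set b : C(X, ℂ) := ∑' m, u m with hbdef
  -- the candidate generating set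
  set S : Set C(X, ℂ) := insert b (f '' {k | k < N}) with hSdef
  set B : Subalgebra ℂ C(X, ℂ) := genUA S with hBdef
  have hBc : IsClosed (B : Set C(X, ℂ)) := isClosed_genUA S
  have hbB : b ∈ B := subset_genUA S (Set.mem_insert _ _)
  have hfB : ∀ k, k < N → f k ∈ B := fun k hk =>
    subset_genUA S (Set.mem_insert_of_mem _ ⟨k, hk, rfl⟩)
  -- B ≤ A
  have hfA : ∀ m, f m ∈ genUA (Set.range f) := fun m => subset_genUA _ ⟨m, rfl⟩
  have huA : ∀ m, u m ∈ genUA (Set.range f) := by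
    intro m
    simp only [hudef]
    by_cases hm : N ≤ m
    · rw [if_pos hm]; exact Subalgebra.smul_mem _ (hfA m) _
    · rw [if_neg hm]; exact zero_mem _
  have hbA : b ∈ genUA (Set.range f) :=
    mem_of_hasSum (isClosed_genUA _) huA husum.hasSum
  have hBA : B ≤ A := by
    rw [hgen]
    refine genUA_le ?_ (isClosed_genUA _)
    intro y hy
    rcases Set.mem_insert_iff.1 hy with rfl | ⟨k, _hk, rfl⟩
    · exact hbA
    · exact hfA k
  -- main induction: every f n lies in B
  have main : ∀ n, f n ∈ B := by
    intro n
    induction n using Nat.strong_induction_on with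
    | _ n IH =>
    by_cases hnN' : n < N
    · exact hfB n hnN'
    push_neg at hnN'
    have hnN : N ≤ n := hnN'
    -- tails
    have hT : ∀ j : ℕ, Summable fun m => u (m + j) := fun j => (summable_nat_add_iff j).2 husum
    set h : C(X, ℂ) := ∑' i, u (i + n) with hhdef
    have hhB : h ∈ B := by
      have hsum_eq : ∑ i ∈ Finset.range n, u i + ∑' i, u (i + n) = b :=
        husum.sum_add_tsum_nat_add n
      have heq : h = b - ∑ i ∈ Finset.range n, u i := by
        rw [hhdef, ← hsum_eq]; ring
      rw [heq]
      refine B.sub_mem hbB (B.sum_mem fun i hi => ?_)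
      have hi' : i < n := Finset.mem_range.1 hi
      simp only [hudef]
      by_cases hiN : N ≤ i
      · rw [if_pos hiN]; exact B.smul_mem (IH i hi') _
      · rw [if_neg hiN]; exact zero_mem _
    have hsplit : h = u (0 + n) + ∑' i, u (i + 1 + n) := (hT n).tsum_eq_zero_add
    set r : C(X, ℂ) := ∑' i, u (i + 1 + n) with hrdef
    have hh : h = ((c n : ℝ) : ℂ) • f n + r := by
      rw [hsplit]
      congr 1
      simp only [zero_add, hudef]
      rw [if_pos hnN]
    -- norm bound on r
    have hrs : Summable fun i => u (i + 1 + n) := by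
      refine (hT (n+1)).congr fun i => ?_
      congr 1; omega
    have step1 : ∀ i, ‖u (i + 1 + n)‖ ≤ ((1/4 : ℝ)^n * Q (n+1)) * (1/4 * (1/4 : ℝ)^i) := by
      intro i
      refine le_trans (hnorm_u _) ?_
      have h1 : Q (i + 1 + n) ≤ Q (n + 1) := hQanti _ _ (by omega)
      have h2 : (1/4 : ℝ)^(i + 1 + n) = (1/4 : ℝ)^n * (1/4 * (1/4 : ℝ)^i) := by
        rw [pow_add, pow_add, pow_one]; ring
      rw [h2]
      have h3 : (0:ℝ) < (1/4 : ℝ)^n * (1/4 * (1/4 : ℝ)^i) := by positivity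
      nlinarith [hQpos (i + 1 + n)]
    have hgeo2 : Summable fun i : ℕ => ((1/4 : ℝ)^n * Q (n+1)) * (1/4 * (1/4 : ℝ)^i) :=
      (hgeo.mul_left (1/4 : ℝ)).mul_left _
    have hns : Summable fun i => ‖u (i + 1 + n)‖ :=
      Summable.of_nonneg_of_le (fun i => norm_nonneg _) step1 hgeo2
    have htsum_geo : ∑' i : ℕ, ((1/4 : ℝ)^n * Q (n+1)) * (1/4 * (1/4 : ℝ)^i)
        = ((1/4 : ℝ)^n * Q (n+1)) * (1/3) := by
      rw [tsum_mul_left, tsum_mul_left, tsum_geometric_of_lt_one (by norm_num) (by norm_num)]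
      norm_num
    have hQc : (1/4 : ℝ)^n * Q (n+1) = c n * (‖g n‖ + 1)⁻¹ := by
      rw [hQsucc n]
      simp only [hcdef, hdendef]
      rw [mul_inv]
      ring
    have hrle : ‖r‖ ≤ c n * (‖g n‖ + 1)⁻¹ / 3 := by
      calc ‖r‖ ≤ ∑' i, ‖u (i + 1 + n)‖ := norm_tsum_le_tsum_norm hns
        _ ≤ ∑' i : ℕ, ((1/4 : ℝ)^n * Q (n+1)) * (1/4 * (1/4 : ℝ)^i) :=
            Summable.tsum_le_tsum step1 hns hgeo2
        _ = ((1/4 : ℝ)^n * Q (n+1)) * (1/3) := htsum_geo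
        _ = c n * (‖g n‖ + 1)⁻¹ / 3 := by rw [hQc]; ring
    -- g n ∈ B
    have himg : f '' {k | k < n} ⊆ (B : Set C(X, ℂ)) := by
      rintro y ⟨k, hk, rfl⟩
      exact IH k hk
    have hgB : g n ∈ B := genUA_le himg hBc (hgmem n hnN).1
    set lc : ℂ := ((c n : ℝ) : ℂ) with hlcdef
    have hlc0 : lc ≠ 0 := by
      simp only [hlcdef]
      exact_mod_cast (hcpos n).ne'
    have hlcinv : ‖lc⁻¹‖ = (c n)⁻¹ := by
      rw [norm_inv, hlcdef, Complex.norm_real, Real.norm_eq_abs, abs_of_pos (hcpos n)]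
    have hMn1 : (0:ℝ) < ‖g n‖ + 1 := by linarith [norm_nonneg (g n)]
    rcases (hgmem n hnN).2 with hfg | hfg
    · -- inverse case
      set u' : C(X, ℂ) := lc⁻¹ • (g n * h) with hu'def
      have hu'B : u' ∈ B := B.smul_mem (B.mul_mem hgB hhB) _
      have hgf : g n * f n = 1 := by rw [mul_comm]; exact hfg
      have hgh : g n * h = lc • (1 : C(X, ℂ)) + g n * r := by
        rw [hh, mul_add, mul_smul_comm, hgf]
      have hone_sub : (1 : C(X, ℂ)) - u' = -(lc⁻¹ • (g n * r)) := by
        rw [hu'def, hgh, smul_add, smul_smul, inv_mul_cancel₀ hlc0, one_smul]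
        abel
      have hnorm1u : ‖(1 : C(X, ℂ)) - u'‖ < 1 := by
        rw [hone_sub, norm_neg, norm_smul, hlcinv]
        have h2 : ‖g n * r‖ ≤ ‖g n‖ * ‖r‖ := norm_mul_le _ _
        have h3 : ‖g n‖ * ‖r‖ ≤ ‖g n‖ * (c n * (‖g n‖ + 1)⁻¹ / 3) := by
          have := norm_nonneg (g n)
          nlinarith [hrle, norm_nonneg r]
        have h4 : (c n)⁻¹ * (‖g n‖ * (c n * (‖g n‖ + 1)⁻¹ / 3)) < 1 := by
          have e1 : (c n)⁻¹ * (‖g n‖ * (c n * (‖g n‖ + 1)⁻¹ / 3))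
              = ((c n)⁻¹ * c n) * (‖g n‖ * (‖g n‖ + 1)⁻¹) / 3 := by ring
          rw [e1, inv_mul_cancel₀ (hcpos n).ne', one_mul]
          have e2 : ‖g n‖ * (‖g n‖ + 1)⁻¹ ≤ 1 := by
            rw [← div_eq_mul_inv, div_le_one hMn1]
            linarith
          linarith
        calc (c n)⁻¹ * ‖g n * r‖ ≤ (c n)⁻¹ * (‖g n‖ * (c n * (‖g n‖ + 1)⁻¹ / 3)) := by
              have hcinv : (0:ℝ) ≤ (c n)⁻¹ := (inv_pos.2 (hcpos n)).le
              nlinarith [le_trans h2 h3]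
          _ < 1 := h4
      obtain ⟨s, hsB, hus⟩ := inv_mem_of_near_one hBc hu'B hnorm1u
      have h1 : f n * u' = lc⁻¹ • h := by
        rw [hu'def, mul_smul_comm, ← mul_assoc, hfg, one_mul]
      have hfn_eq : f n = (lc⁻¹ • h) * s := by
        calc f n = f n * (u' * s) := by rw [hus, mul_one]
          _ = (f n * u') * s := (mul_assoc _ _ _).symm
          _ = (lc⁻¹ • h) * s := by rw [h1]
      rw [hfn_eq]
      exact B.mul_mem (B.smul_mem hhB _) hsB
    · -- logarithm case
      set q : C(X, ℂ) := -(lc⁻¹ • r) with hqdef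
      have hq3 : ‖q‖ ≤ 1/3 := by
        rw [hqdef, norm_neg, norm_smul, hlcinv]
        have h1 : (c n)⁻¹ * ‖r‖ ≤ (c n)⁻¹ * (c n * (‖g n‖ + 1)⁻¹ / 3) := by
          have hcinv : (0:ℝ) ≤ (c n)⁻¹ := (inv_pos.2 (hcpos n)).le
          nlinarith [hrle]
        have h2 : (c n)⁻¹ * (c n * (‖g n‖ + 1)⁻¹ / 3) ≤ 1/3 := by
          rw [show (c n)⁻¹ * (c n * (‖g n‖ + 1)⁻¹ / 3) = (‖g n‖ + 1)⁻¹ / 3 by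
            field_simp [(hcpos n).ne']]
          have : (‖g n‖ + 1)⁻¹ ≤ 1 := by
            rw [inv_le_one_iff₀]; right; linarith [norm_nonneg (g n)]
          linarith
        linarith
      set F : C(X, ℂ) := g n * NormedSpace.exp (-(lc⁻¹ • h)) with hFdef
      have hFB : F ∈ B := B.mul_mem hgB (exp_mem hBc (B.neg_mem (B.smul_mem hhB _)))
      have hFx : ∀ x, F x = Complex.exp (q x) := by
        intro x
        have hexp : (NormedSpace.exp (-(lc⁻¹ • h))) x
            = Complex.exp ((-(lc⁻¹ • h)) x) := by
          rw [NormedSpace.exp_continuousMap_eq]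
          simp [← Complex.exp_eq_exp_ℂ]
        calc F x = g n x * Complex.exp ((-(lc⁻¹ • h)) x) := by
              rw [hFdef, ContinuousMap.mul_apply, hexp]
          _ = Complex.exp (f n x + (-(lc⁻¹ • h)) x) := by rw [hfg x, ← Complex.exp_add]
          _ = Complex.exp (q x) := by
              congr 1
              simp only [hqdef, hh, ContinuousMap.neg_apply, ContinuousMap.smul_apply,
                ContinuousMap.add_apply, smul_eq_mul]
              field_simp
              ring
      have hqx : ∀ x, ‖q x‖ ≤ 1/3 := fun x =>
        le_trans (ContinuousMap.norm_coe_le_norm q x) hq3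
      have hF1 : ‖F - 1‖ ≤ 2/3 := by
        rw [ContinuousMap.norm_le _ (by norm_num)]
        intro x
        rw [ContinuousMap.sub_apply, ContinuousMap.one_apply, hFx x]
        have habs : ‖q x‖ ≤ 1 := by
          linarith [hqx x]
        have := Complex.norm_exp_sub_one_le habs
        calc ‖Complex.exp (q x) - 1‖ ≤ 2 * ‖q x‖ := this
          _ ≤ 2 * (1/3) := by linarith [hqx x]
          _ = 2/3 := by norm_num
      have hF1lt : ‖F - 1‖ < 1 := lt_of_le_of_lt hF1 (by norm_num)
      set t : ℕ → C(X, ℂ) := fun k => (((-1 : ℂ))^(k+1) / k) • (F - 1)^k with htdef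
      have htnorm : ∀ k, ‖t k‖ ≤ ‖F - 1‖^k := by
        intro k
        simp only [htdef]
        rcases Nat.eq_zero_or_pos k with rfl | hk
        · simp
        rw [norm_smul]
        have h1 : ‖((-1 : ℂ))^(k+1) / (k : ℂ)‖ ≤ 1 := by
          rw [norm_div, norm_pow, norm_neg, norm_one, one_pow]
          rw [div_le_one (by
            rw [Complex.norm_natCast]
            exact_mod_cast hk)]
          rw [Complex.norm_natCast]
          exact_mod_cast hk
        have h2 : ‖(F - 1)^k‖ ≤ ‖F - 1‖^k := norm_pow_le' _ hk
        nlinarith [norm_nonneg (((-1 : ℂ))^(k+1) / (k : ℂ)), norm_nonneg ((F - 1)^k),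
          pow_nonneg (norm_nonneg (F - 1)) k]
      have htsummable : Summable t :=
        Summable.of_norm_bounded (summable_geometric_of_lt_one (norm_nonneg _) hF1lt) htnorm
      set w : C(X, ℂ) := ∑' k, t k with hwdef
      have hwB : w ∈ B :=
        mem_of_hasSum hBc
          (fun k => B.smul_mem (pow_mem (B.sub_mem hFB (one_mem B)) k) _) htsummable.hasSum
      have hwq : w = q := by
        ext x
        have hsum : HasSum (fun k : ℕ => (-1 : ℂ)^(k+1) * (F x - 1)^k / k)
            (Complex.log (1 + (F x - 1))) := by
          refine Complex.hasSum_taylorSeries_log ?_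
          calc ‖F x - 1‖ = ‖(F - 1) x‖ := by
                rw [ContinuousMap.sub_apply, ContinuousMap.one_apply]
            _ ≤ ‖F - 1‖ := ContinuousMap.norm_coe_le_norm _ _
            _ < 1 := hF1lt
        have hwx : w x = ∑' k, (t k) x := (ContinuousMap.tsum_apply htsummable x).symm
        have heval : ∑' k, (t k) x = Complex.log (1 + (F x - 1)) := by
          rw [← hsum.tsum_eq]
          refine tsum_congr fun k => ?_
          simp only [htdef, ContinuousMap.smul_apply, ContinuousMap.pow_apply,
            ContinuousMap.sub_apply, ContinuousMap.one_apply, smul_eq_mul]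
          ring
        have him1 : -Real.pi < (q x).im := by
          have := Complex.abs_im_le_norm (q x)
          have hpi := Real.pi_gt_three
          have := hqx x
          cases abs_le.1 ‹|(q x).im| ≤ ‖q x‖› with
          | intro h1 h2 => linarith
        have him2 : (q x).im ≤ Real.pi := by
          have habs := Complex.abs_im_le_norm (q x)
          have hpi := Real.pi_gt_three
          have := hqx x
          cases abs_le.1 habs with
          | intro h1 h2 => linarith
        rw [hwx, heval]
        have : (1 : ℂ) + (F x - 1) = F x := by ring
        rw [this, hFx x, Complex.log_exp him1 him2]
      have hrB : r ∈ B := by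
        have hreq : r = -(lc • w) := by
          rw [hwq, hqdef, smul_neg, neg_neg, smul_smul, mul_inv_cancel₀ hlc0, one_smul]
        rw [hreq]
        exact B.neg_mem (B.smul_mem hwB _)
      have hfn_eq : f n = lc⁻¹ • (h - r) := by
        rw [hh, add_sub_cancel_right, smul_smul, inv_mul_cancel₀ hlc0, one_smul]
      rw [hfn_eq]
      exact B.smul_mem (B.sub_mem hhB hrB) _
  -- conclude
  have hAB : A = B := by
    refine le_antisymm ?_ hBA
    rw [hgen]
    refine genUA_le ?_ hBc
    rintro y ⟨m, rfl⟩
    exact main m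
  refine ⟨fun i : Fin (N+1) => if (i : ℕ) < N then f i else b, ?_⟩
  have hrange : Set.range (fun i : Fin (N+1) => if (i : ℕ) < N then f i else b) = S := by
    ext y
    constructor
    · rintro ⟨i, rfl⟩
      by_cases hi : (i : ℕ) < N
      · simp only [if_pos hi]
        exact Set.mem_insert_of_mem _ ⟨i, hi, rfl⟩
      · simp only [if_neg hi]
        exact Set.mem_insert _ _
    · intro hy
      rcases Set.mem_insert_iff.1 hy with rfl | ⟨k, hk, rfl⟩
      · exact ⟨⟨N, Nat.lt_succ_self N⟩, by simp⟩
      · have hk' : k < N := hk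
        exact ⟨⟨k, Nat.lt_succ_of_lt hk'⟩, by simp [hk']⟩
  rw [hrange, hAB, hBdef]
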